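/- arXiv:1012.3654 — 12 statements merged into one kernel-verified Lean document; each statement's English description precedes it below -/
import Mathlib

section
/- Let m, k be nonnegative integers and define a_1 = 1, a_{n+1} = Σ_{i=1}^{n} (m(n-i)+k) a_i. Then a_2 = k, a_3 = m + k + k^2, and for all n ≥ 2, a_{n+2} = (k+2) a_{n+1} + (m-k-1) a_n. -/
/-! Subtracting consecutive instances of the recurrence leaves
`a (n + 2) = (k + 1) a (n + 1) + m (a 1 + ⋯ + a n)`, since every weight `m (n - i) + k`
grows by `m`; subtracting two consecutive instances of this identity removes the partial sums. -/

open Finset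

section LinearWeight

variable {R : Type*} [CommRing R] (m k : ℕ) (a : ℕ → R)

theorem sum_Icc_succ_linearWeight (n : ℕ) :
    ∑ i ∈ Icc 1 (n + 1), ((m * (n + 1 - i) + k : ℕ) : R) * a i =
      ∑ i ∈ Icc 1 n, ((m * (n - i) + k : ℕ) : R) * a i + k * a (n + 1) +
        m * ∑ i ∈ Icc 1 n, a i := by
  have hweights : ∑ i ∈ Icc 1 n, ((m * (n + 1 - i) + k : ℕ) : R) * a i =
      ∑ i ∈ Icc 1 n, (((m * (n - i) + k : ℕ) : R) * a i + m * a i) :=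
    sum_congr rfl fun i hi ↦ by
      rw [Nat.sub_add_comm (mem_Icc.mp hi).2]
      push_cast
      ring
  rw [sum_Icc_succ_top (by omega), hweights, sum_add_distrib, ← mul_sum]
  simp only [Nat.sub_self, mul_zero, zero_add]
  ring

variable {m k a}

theorem eq_add_mul_sum_of_linearWeight_rec
    (hrec : ∀ n ≥ 1, a (n + 1) = ∑ i ∈ Icc 1 n, ((m * (n - i) + k : ℕ) : R) * a i)
    {n : ℕ} (hn : 1 ≤ n) :
    a (n + 2) = (k + 1) * a (n + 1) + m * ∑ i ∈ Icc 1 n, a i := by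
  rw [hrec (n + 1) (by omega), sum_Icc_succ_linearWeight, ← hrec n hn]
  ring

theorem three_term_rec_of_linearWeight_rec
    (hrec : ∀ n ≥ 1, a (n + 1) = ∑ i ∈ Icc 1 n, ((m * (n - i) + k : ℕ) : R) * a i)
    {n : ℕ} (hn : 1 ≤ n) :
    a (n + 3) = (k + 2) * a (n + 2) + (m - k - 1) * a (n + 1) := by
  have hcur := eq_add_mul_sum_of_linearWeight_rec hrec hn
  have hnext := eq_add_mul_sum_of_linearWeight_rec hrec (n := n + 1) (by omega)
  rw [sum_Icc_succ_top (by omega)] at hnext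
  linear_combination hnext - hcur

end LinearWeight

theorem stmt_2 (m k : ℕ) (a : ℕ → ℤ) (h1 : a 1 = 1)
    (hrec : ∀ n ≥ 1, a (n + 1) = ∑ i ∈ Finset.Icc 1 n, ((m * (n - i) + k : ℕ) : ℤ) * a i) :
    a 2 = k ∧ a 3 = m + k + k ^ 2 ∧
      ∀ n ≥ 2, a (n + 2) = ((k : ℤ) + 2) * a (n + 1) + ((m : ℤ) - k - 1) * a n := by
  have h2 : a 2 = k := by simpa [h1] using hrec 1 le_rfl
  refine ⟨h2, ?_, fun n hn ↦ ?_⟩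
  · rw [hrec 2 (by norm_num), sum_Icc_succ_top (by norm_num), Icc_self, sum_singleton, h1, h2]
    push_cast
    ring
  · obtain ⟨j, rfl⟩ : ∃ j, n = j + 1 := ⟨n - 1, by omega⟩
    exact three_term_rec_of_linearWeight_rec hrec (by omega)
end

section
/- Define a_1 = 1, a_{n+1} = Σ_{i=1}^{n} (n-i+1) a_i. Then a_{n+1} = F_{2n} for all n ≥ 1, where F denotes the Fibonacci numbers. -/
/-!
Write `S n = a 1 + ⋯ + a n`. Raising `n` by one adds one more copy of each `a i` to the weighted
sum, so `a (n + 2) = a (n + 1) + S (n + 1)`, while `S (n + 1) = S n + a (n + 1)`. Hence the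
interleaved sequence `S 1, a 2, S 2, a 3, …` satisfies the Fibonacci recursion, and starting from
`S 1 = a 2 = 1` it is `F 1, F 2, F 3, F 4, …`.
-/

open Finset

theorem sum_Icc_succ_sub_add_one_mul (f : ℕ → ℕ) (n : ℕ) :
    ∑ i ∈ Icc 1 (n + 1), (n + 1 - i + 1) * f i =
      ∑ i ∈ Icc 1 n, (n - i + 1) * f i + ∑ i ∈ Icc 1 (n + 1), f i := by
  rw [sum_Icc_succ_top (by omega), sum_Icc_succ_top (by omega : 1 ≤ n + 1), ← add_assoc,
    ← sum_add_distrib, Nat.sub_self, zero_add, one_mul]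
  congr 1
  refine sum_congr rfl fun i hi => ?_
  rw [mem_Icc] at hi
  rw [show n + 1 - i + 1 = (n - i + 1) + 1 by omega, add_one_mul]

theorem weighted_sum_rec_eq_fib (a : ℕ → ℕ) (h1 : a 1 = 1)
    (hrec : ∀ n ≥ 1, a (n + 1) = ∑ i ∈ Icc 1 n, (n - i + 1) * a i) (n : ℕ) :
    a (n + 2) = Nat.fib (2 * n + 2) ∧ ∑ i ∈ Icc 1 (n + 1), a i = Nat.fib (2 * n + 1) := by
  induction n with
  | zero => simp [hrec 1 le_rfl, h1]
  | succ n ih =>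
    obtain ⟨ha, hS⟩ := ih
    have hS' : ∑ i ∈ Icc 1 (n + 2), a i = Nat.fib (2 * n + 3) := by
      rw [sum_Icc_succ_top (by omega), hS, ha, Nat.fib_add_two (n := 2 * n + 1)]
    have ha' : a (n + 3) = a (n + 2) + ∑ i ∈ Icc 1 (n + 2), a i := by
      rw [hrec (n + 2) (by omega), sum_Icc_succ_sub_add_one_mul, ← hrec (n + 1) (by omega)]
    refine ⟨?_, hS'⟩
    rw [ha', ha, hS', show 2 * (n + 1) + 2 = 2 * n + 2 + 2 by ring, Nat.fib_add_two (n := 2 * n + 2)]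

theorem stmt_4 (a : ℕ → ℕ) (h1 : a 1 = 1)
    (hrec : ∀ n ≥ 1, a (n + 1) = ∑ i ∈ Finset.Icc 1 n, (n - i + 1) * a i) :
    ∀ n ≥ 1, a (n + 1) = Nat.fib (2 * n) := by
  rintro (_ | n) hn
  · omega
  · simpa [mul_add] using (weighted_sum_rec_eq_fib a h1 hrec n).1
end

section
/- Let m ≥ 1 and define a_1 = 1, a_{n+1} = Σ_{i=1}^{n} (m(n-i) + m - 1) a_i. Then a_2 = m-1 and a_{n+1} = m^2 (m+1)^{n-2} for all n ≥ 2. -/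
/-!
Taking differences of consecutive instances of the recurrence makes the weights `m (n - i)`
collapse to `m`, so `a (n + 2) = (k + 1) a (n + 1) + m (a 1 + ⋯ + a n)` when the weights are
`m (n - i) + k`. Differencing once more removes the partial sum and leaves the three-term relation
`a (n + 3) + (k + 1) a (n + 1) = (k + 2) a (n + 2) + m a (n + 1)`. For `k = m - 1` the last terms
cancel, so from `a 3 = m ^ 2` on the sequence is geometric with ratio `m + 1`.
-/

open Finset

section APRecurrence

variable {R : Type*} [CommSemiring R] {m k : R} {a : ℕ → R}

theorem apRecurrence_add_two
    (hrec : ∀ n ≥ 1, a (n + 1) = ∑ i ∈ Icc 1 n, (m * ((n - i : ℕ) : R) + k) * a i)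
    {n : ℕ} (hn : 1 ≤ n) :
    a (n + 2) = (k + 1) * a (n + 1) + m * ∑ i ∈ Icc 1 n, a i := by
  have hshift : ∑ i ∈ Icc 1 n, (m * ((n + 1 - i : ℕ) : R) + k) * a i
      = a (n + 1) + m * ∑ i ∈ Icc 1 n, a i := by
    rw [hrec n hn, mul_sum, ← sum_add_distrib]
    refine sum_congr rfl fun i hi => ?_
    rw [show n + 1 - i = n - i + 1 by grind]
    push_cast
    ring
  rw [hrec (n + 1) (by omega), sum_Icc_succ_top (by omega), hshift, Nat.sub_self]
  push_cast
  ring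

theorem apRecurrence_add_three
    (hrec : ∀ n ≥ 1, a (n + 1) = ∑ i ∈ Icc 1 n, (m * ((n - i : ℕ) : R) + k) * a i)
    {n : ℕ} (hn : 1 ≤ n) :
    a (n + 3) + (k + 1) * a (n + 1) = (k + 2) * a (n + 2) + m * a (n + 1) := by
  rw [apRecurrence_add_two hrec (by omega : 1 ≤ n + 1), sum_Icc_succ_top (by omega),
    apRecurrence_add_two hrec hn]
  ring

end APRecurrence

theorem stmt_5 (m : ℕ) (hm : m ≥ 1) (a : ℕ → ℕ) (h1 : a 1 = 1)
    (hrec : ∀ n ≥ 1, a (n + 1) = ∑ i ∈ Finset.Icc 1 n, (m * (n - i) + (m - 1)) * a i) :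
    a 2 = m - 1 ∧ ∀ n ≥ 2, a (n + 1) = m ^ 2 * (m + 1) ^ (n - 2) := by
  have hm' : m - 1 + 1 = m := by omega
  have h2 : a 2 = m - 1 := by simpa [h1] using hrec 1 le_rfl
  have h3 : a 3 = m ^ 2 := by
    rw [apRecurrence_add_two hrec le_rfl, hm', Icc_self, sum_singleton, h1, h2, mul_one,
      ← mul_add_one, hm', sq]
  have hstep : ∀ n ≥ 2, a (n + 2) = (m + 1) * a (n + 1) := by
    intro n hn
    have h := apRecurrence_add_three hrec (n := n - 1) (by omega)
    rw [hm', show m - 1 + 2 = m + 1 by omega, show n - 1 + 3 = n + 2 by omega,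
      show n - 1 + 2 = n + 1 by omega] at h
    exact Nat.add_right_cancel h
  refine ⟨h2, fun n hn => ?_⟩
  induction n, hn using Nat.le_induction with
  | base => simpa using h3
  | succ n hn ih =>
    rw [hstep n hn, ih, show n + 1 - 2 = n - 2 + 1 by omega]
    ring
end

section
/- Let k, m, p be rational numbers such that b_i = k i^2 + m i + p is a nonnegative integer for all i ≥ 1, and define a_1 = 1, a_{n+1} = Σ_{i=1}^{n} b_{n+1-i} a_i. Then for all n ≥ 3, a_{n+2} = (k+m+p+3) a_{n+1} + (k-m-2p-3) a_n + (p+1) a_{n-1}. -/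
/-!
The coefficients `b j = k j² + m j + p` form a quadratic sequence, so their third difference
vanishes. Split off from the convolutions for `a (n + 2)`, `a (n + 1)`, `a n` the terms that
involve `a (n - 1)`, `a n`, `a (n + 1)`; what remains are, like `a (n - 1)` itself, convolutions
of `b` with `a 1, …, a (n - 2)`, shifted by 3, 2, 1, 0, and their third difference vanishes with that of `b`.
So the third difference of `a` only sees the split-off terms, whose coefficients are
`b 1`, `b 2`, `b 3` (and `b 3 - 3 b 2 + 3 b 1 = p`).
-/

open Finset

section

variable {R : Type*} [CommRing R] {b : ℕ → R}

theorem sum_Icc_mul_third_difference_eq_zero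
    (hb : ∀ j, b (j + 3) - 3 * b (j + 2) + 3 * b (j + 1) - b j = 0) (a : ℕ → R) {N s : ℕ}
    (hNs : N ≤ s) :
    ∑ i ∈ Icc 1 N, b (s + 3 - i) * a i - 3 * ∑ i ∈ Icc 1 N, b (s + 2 - i) * a i
      + 3 * ∑ i ∈ Icc 1 N, b (s + 1 - i) * a i - ∑ i ∈ Icc 1 N, b (s - i) * a i = 0 := by
  simp only [mul_sum, ← sum_sub_distrib, ← sum_add_distrib]
  refine sum_eq_zero fun i hi => ?_
  have hi : i ≤ s := (mem_Icc.mp hi).2.trans hNs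
  obtain ⟨j, rfl⟩ : ∃ j, s = j + i := ⟨s - i, by omega⟩
  simp only [show ∀ t, j + i + t - i = j + t from fun t => by omega, Nat.add_sub_cancel]
  linear_combination a i * hb j

theorem convolution_recurrence_of_third_difference
    (hb : ∀ j, b (j + 3) - 3 * b (j + 2) + 3 * b (j + 1) - b j = 0) {a : ℕ → R}
    (hrec : ∀ n ≥ 1, a (n + 1) = ∑ i ∈ Icc 1 n, b (n + 1 - i) * a i) :
    ∀ n ≥ 3, a (n + 2) = (b 1 + 3) * a (n + 1) + (b 2 - 3 * b 1 - 3) * a n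
      + (b 3 - 3 * b 2 + 3 * b 1 + 1) * a (n - 1) := by
  intro n hn
  obtain ⟨N, rfl⟩ : ∃ N, n = N + 3 := ⟨n - 3, by omega⟩
  set C : ℕ → R := fun s => ∑ i ∈ Icc 1 (N + 1), b (s - i) * a i
  have peel : ∀ M s, ∑ i ∈ Icc 1 (M + 1), b (s - i) * a i
      = ∑ i ∈ Icc 1 M, b (s - i) * a i + b (s - (M + 1)) * a (M + 1) :=
    fun M s => sum_Icc_succ_top (by omega) _
  have ha2 : a (N + 2) = C (N + 2) := hrec (N + 1) (by omega)
  have ha3 : a (N + 3) = C (N + 3) + b 1 * a (N + 2) := by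
    rw [hrec _ (by omega), peel]
    simp [C, show N + 3 - (N + 2) = 1 by omega]
  have ha4 : a (N + 4) = C (N + 4) + b 2 * a (N + 2) + b 1 * a (N + 3) := by
    rw [hrec _ (by omega), peel, peel]
    simp [C, show N + 4 - (N + 2) = 2 by omega, show N + 4 - (N + 3) = 1 by omega]
  have ha5 : a (N + 5) = C (N + 5) + b 3 * a (N + 2) + b 2 * a (N + 3) + b 1 * a (N + 4) := by
    rw [hrec _ (by omega), peel, peel, peel]
    simp [C, show N + 5 - (N + 2) = 3 by omega, show N + 5 - (N + 3) = 2 by omega,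
      show N + 5 - (N + 4) = 1 by omega]
  have hC : C (N + 5) - 3 * C (N + 4) + 3 * C (N + 3) - C (N + 2) = 0 :=
    sum_Icc_mul_third_difference_eq_zero hb a (by omega)
  rw [show N + 3 - 1 = N + 2 from rfl]
  linear_combination ha5 - 3 * ha4 + 3 * ha3 - ha2 + hC

end

theorem stmt_6_general (k m p : ℚ)
    (a : ℕ → ℚ)
    (hrec : ∀ n ≥ 1, a (n + 1) =
      ∑ i ∈ Finset.Icc 1 n, (k * ((n + 1 - i : ℕ) : ℚ) ^ 2 + m * ((n + 1 - i : ℕ) : ℚ) + p) * a i) :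
    ∀ n ≥ 3, a (n + 2) = (k + m + p + 3) * a (n + 1) + (k - m - 2 * p - 3) * a n + (p + 1) * a (n - 1) := by
  intro n hn
  have key := convolution_recurrence_of_third_difference
    (b := fun j => k * (j : ℚ) ^ 2 + m * j + p) (fun j => by push_cast; ring) hrec n hn
  linear_combination key

theorem stmt_6 (k m p : ℚ)
    (hb : ∀ i : ℕ, i ≥ 1 → ∃ z : ℕ, k * (i : ℚ) ^ 2 + m * i + p = z)
    (a : ℕ → ℚ) (h1 : a 1 = 1)
    (hrec : ∀ n ≥ 1, a (n + 1) =
      ∑ i ∈ Finset.Icc 1 n, (k * ((n + 1 - i : ℕ) : ℚ) ^ 2 + m * ((n + 1 - i : ℕ) : ℚ) + p) * a i) :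
    ∀ n ≥ 3, a (n + 2) = (k + m + p + 3) * a (n + 1) + (k - m - 2 * p - 3) * a n + (p + 1) * a (n - 1) :=
  stmt_6_general k m p a hrec
end

section
/- Define a_1 = 1, a_{n+1} = Σ_{i=1}^{n} ((n+1-i)^2 - 1) a_i. Then a_2 = 0, a_3 = 3, and a_{n+1} = 8 · 3^{n-3} for all n ≥ 3. -/
/-! Track the moments `M k n = ∑_{i ≤ n} (n + 1 - i)^k a_i` for `k = 0, 1, 2`. Since
`(j + 1)^2 = j^2 + 2 j + 1`, advancing `n` by one acts linearly on `(M 0, M 1, M 2)`, and the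
recurrence reads `a_{n+1} = M 2 n - M 0 n`. At `n = 3` the moments are `(4, 6, 12)`, an
eigenvector of this step with eigenvalue `3`; hence `a_{n+1} = 12 c - 4 c = 8 c` with
`c = 3^{n-3}`. -/

open Finset

namespace ConvolutionMoments

variable (a : ℕ → ℕ)

def moment (k n : ℕ) : ℕ := ∑ i ∈ Icc 1 n, (n + 1 - i) ^ k * a i

@[simp]
theorem moment_zero_right (k : ℕ) : moment a k 0 = 0 := by
  simp [moment]

theorem moment_succ (k n : ℕ) :
    moment a k (n + 1) = ∑ i ∈ Icc 1 n, (n + 1 - i + 1) ^ k * a i + a (n + 1) := by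
  rw [moment, sum_Icc_succ_top (by omega), Nat.add_sub_cancel_left, one_pow, one_mul]
  congr 1
  refine sum_congr rfl fun i hi => ?_
  rw [show n + 1 + 1 - i = n + 1 - i + 1 by grind]

theorem moment_zero_succ (n : ℕ) : moment a 0 (n + 1) = moment a 0 n + a (n + 1) := by
  rw [moment_succ, moment]
  simp only [pow_zero]

theorem moment_one_succ (n : ℕ) :
    moment a 1 (n + 1) = moment a 1 n + moment a 0 (n + 1) := by
  rw [moment_succ, moment_succ]
  unfold moment
  simp only [pow_one, pow_zero, add_mul, one_mul, sum_add_distrib]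
  ring

theorem moment_two_succ (n : ℕ) :
    moment a 2 (n + 1) = moment a 2 n + 2 * moment a 1 n + moment a 0 (n + 1) := by
  rw [moment_succ, moment_succ]
  unfold moment
  rw [mul_sum]
  simp only [add_sq, pow_one, pow_zero, one_pow, mul_one, one_mul, add_mul, sum_add_distrib]
  ring_nf

theorem add_moment_zero_eq_moment_two {n : ℕ}
    (hrec : a (n + 1) = ∑ i ∈ Icc 1 n, ((n + 1 - i) ^ 2 - 1) * a i) :
    a (n + 1) + moment a 0 n = moment a 2 n := by
  rw [hrec, moment, moment, ← sum_add_distrib]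
  refine sum_congr rfl fun i hi => ?_
  have hpos : 1 ≤ (n + 1 - i) ^ 2 := Nat.one_le_pow _ _ (by grind)
  rw [pow_zero, one_mul, Nat.sub_one_mul, Nat.sub_add_cancel (Nat.le_mul_of_pos_left _ hpos)]

theorem moments_succ_of_eq_mul {n c : ℕ} (ha : a (n + 1) + moment a 0 n = moment a 2 n)
    (h : moment a 0 n = 4 * c ∧ moment a 1 n = 6 * c ∧ moment a 2 n = 12 * c) :
    moment a 0 (n + 1) = 4 * (3 * c) ∧ moment a 1 (n + 1) = 6 * (3 * c) ∧
      moment a 2 (n + 1) = 12 * (3 * c) := by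
  obtain ⟨h0, h1, h2⟩ := h
  have ha' : a (n + 1) = 8 * c := by omega
  have h0' : moment a 0 (n + 1) = 4 * (3 * c) := by rw [moment_zero_succ, h0, ha']; ring
  refine ⟨h0', ?_, ?_⟩
  · rw [moment_one_succ, h1, h0']; ring
  · rw [moment_two_succ, h2, h1, h0']; ring

theorem moments_add_eq_mul_pow {n₀ : ℕ}
    (ha : ∀ n ≥ n₀, a (n + 1) + moment a 0 n = moment a 2 n)
    (h : moment a 0 n₀ = 4 ∧ moment a 1 n₀ = 6 ∧ moment a 2 n₀ = 12) (m : ℕ) :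
    moment a 0 (n₀ + m) = 4 * 3 ^ m ∧ moment a 1 (n₀ + m) = 6 * 3 ^ m ∧
      moment a 2 (n₀ + m) = 12 * 3 ^ m := by
  induction m with
  | zero => simpa using h
  | succ m ih =>
    simpa only [pow_succ', ← add_assoc] using
      moments_succ_of_eq_mul a (ha (n₀ + m) (Nat.le_add_right _ _)) ih

end ConvolutionMoments

open ConvolutionMoments

theorem stmt_7 (a : ℕ → ℕ) (h1 : a 1 = 1)
    (hrec : ∀ n ≥ 1, a (n + 1) = ∑ i ∈ Finset.Icc 1 n, ((n + 1 - i) ^ 2 - 1) * a i) :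
    a 2 = 0 ∧ a 3 = 3 ∧ ∀ n ≥ 3, a (n + 1) = 8 * 3 ^ (n - 3) := by
  have ha : ∀ n ≥ 1, a (n + 1) + moment a 0 n = moment a 2 n :=
    fun n hn => add_moment_zero_eq_moment_two a (hrec n hn)
  have m1 : moment a 0 1 = 1 ∧ moment a 1 1 = 1 ∧ moment a 2 1 = 1 := by
    simp [moment_zero_succ a 0, moment_one_succ a 0, moment_two_succ a 0, h1]
  have h2 : a 2 = 0 := by simpa [m1] using ha 1 le_rfl
  have m2 : moment a 0 2 = 1 ∧ moment a 1 2 = 2 ∧ moment a 2 2 = 4 := by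
    simp [moment_zero_succ a 1, moment_one_succ a 1, moment_two_succ a 1, m1, h2]
  have h3 : a 3 = 3 := by simpa [m2] using ha 2 (by norm_num)
  have m3 : moment a 0 3 = 4 ∧ moment a 1 3 = 6 ∧ moment a 2 3 = 12 := by
    simp [moment_zero_succ a 2, moment_one_succ a 2, moment_two_succ a 2, m2, h3]
  refine ⟨h2, h3, fun n hn => ?_⟩
  obtain ⟨m, rfl⟩ := Nat.exists_eq_add_of_le hn
  obtain ⟨hM0, -, hM2⟩ := moments_add_eq_mul_pow a (fun n hn => ha n (by omega)) m3 m
  have hstep := ha (3 + m) (by omega)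
  rw [Nat.add_sub_cancel_left]
  omega
end

section
/- Define a_1 = 1, a_{n+1} = Σ_{i=1}^{n} binom(n-i+2, 2) a_i. Then a_2 = 1, a_3 = 4, a_4 = 13, and for all n ≥ 3, a_{n+2} = 4 a_{n+1} - 3 a_n + a_{n-1}. Moreover a_{n+1} = Σ_{i=0}^{n} binom(n+2i-1, n-i) for all n ≥ 1. -/
/-!
Put `A(x) = ∑ aₙ₊₁ xⁿ`. The recursion says `A = 1 + x A / (1 - x)³`, and convolving a sequence
with `n ↦ multichoose d n` is multiplication by `(1 - x)⁻ᵈ`. Clearing the denominator,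
`(1 - x)³ (A - 1) = x A`, is the four-term recurrence. Solving instead,
`A = ∑ᵢ xⁱ (1 - x)⁻³ⁱ`, whose `n`-th coefficient is `∑ᵢ multichoose (3i) (n - i)`, the closed form.
Both are argued on coefficients, so no power series identity beyond
`(1 - x)⁻ᵖ (1 - x)⁻ᵠ = (1 - x)⁻⁽ᵖ⁺ᵠ⁾` is needed.
-/

open Finset PowerSeries

theorem PowerSeries.coeff_invOneSubPow_val (S : Type*) [CommRing S] (d n : ℕ) :
    coeff n (invOneSubPow S d : S⟦X⟧) = d.multichoose n := by
  cases d with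
  | zero => cases n <;> simp [invOneSubPow_zero, coeff_one]
  | succ d =>
    rw [invOneSubPow_val_succ_eq_mk_add_choose, coeff_mk, Nat.multichoose_eq,
      Nat.add_right_comm, Nat.add_sub_cancel, Nat.choose_symm_add]

theorem Nat.sum_antidiagonal_multichoose_mul (p q n : ℕ) :
    ∑ ij ∈ antidiagonal n, p.multichoose ij.1 * q.multichoose ij.2 = (p + q).multichoose n := by
  apply Nat.cast_injective (R := ℤ)
  push_cast
  simp only [← coeff_invOneSubPow_val ℤ, invOneSubPow_add, Units.val_mul, coeff_mul]

theorem Finset.Nat.sum_antidiagonal_sum_antidiagonal_fst {M : Type*} [AddCommMonoid M]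
    (f : ℕ → ℕ → ℕ → M) (n : ℕ) :
    ∑ p ∈ antidiagonal n, ∑ q ∈ antidiagonal p.1, f q.1 q.2 p.2 =
      ∑ p ∈ antidiagonal n, ∑ q ∈ antidiagonal p.2, f p.1 q.1 q.2 := by
  rw [sum_sigma', sum_sigma']
  refine sum_nbij' (fun x => ⟨(x.2.1, x.2.2 + x.1.2), (x.2.2, x.1.2)⟩)
    (fun x => ⟨(x.1.1 + x.2.1, x.2.2), (x.1.1, x.2.1)⟩) ?_ ?_ ?_ ?_ (fun _ _ => rfl) <;>
  · rintro ⟨⟨k, j⟩, ⟨i, m⟩⟩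
    simp only [mem_sigma, HasAntidiagonal.mem_antidiagonal, and_true]
    rintro ⟨rfl, rfl⟩
    first | rfl | omega

section MultichooseConvolution

variable {R : Type*} [Semiring R] (u : ℕ → R)

theorem sum_antidiagonal_mul_multichoose_zero (n : ℕ) :
    ∑ p ∈ antidiagonal n, u p.1 * (Nat.multichoose 0 p.2 : R) = u n := by
  cases n <;> simp [Finset.Nat.sum_antidiagonal_succ']

theorem sum_antidiagonal_mul_multichoose_succ (d n : ℕ) :
    ∑ p ∈ antidiagonal (n + 1), u p.1 * ((d + 1).multichoose p.2 : R) =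
      ∑ p ∈ antidiagonal n, u p.1 * ((d + 1).multichoose p.2 : R) +
        ∑ p ∈ antidiagonal (n + 1), u p.1 * (d.multichoose p.2 : R) := by
  simp only [Finset.Nat.sum_antidiagonal_succ', Nat.multichoose_succ_succ, Nat.cast_add, mul_add,
    sum_add_distrib, Nat.multichoose_zero_right]
  abel

theorem eq_of_forall_succ_eq_sum_antidiagonal {u v : ℕ → R} (c : ℕ → R) (h₀ : u 0 = v 0)
    (hu : ∀ n, u (n + 1) = ∑ p ∈ antidiagonal n, u p.1 * c p.2)
    (hv : ∀ n, v (n + 1) = ∑ p ∈ antidiagonal n, v p.1 * c p.2) : u = v := by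
  funext n
  induction n using Nat.strong_induction_on with
  | _ n ih =>
    cases n with
    | zero => exact h₀
    | succ n =>
      rw [hu, hv]
      refine sum_congr rfl fun p hp => ?_
      rw [ih p.1 (Nat.lt_succ_of_le (HasAntidiagonal.antidiagonal.fst_le hp))]

end MultichooseConvolution

theorem four_term_recurrence_of_succ_eq_sum_antidiagonal {R : Type*} [CommRing R] (u : ℕ → R)
    (hu : ∀ n, u (n + 1) = ∑ p ∈ antidiagonal n, u p.1 * ((3).multichoose p.2 : R)) (n : ℕ) :
    u (n + 4) = 4 * u (n + 3) - 3 * u (n + 2) + u (n + 1) := by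
  -- `c d n` is the `n`-th coefficient of `U(x) / (1 - x)ᵈ`; `hpascal` is multiplication by `1 - x`.
  set c : ℕ → ℕ → R := fun d n => ∑ p ∈ antidiagonal n, u p.1 * (d.multichoose p.2 : R)
  have hu' : ∀ n, u (n + 1) = c 3 n := hu
  have hpascal : ∀ d n, c (d + 1) (n + 1) = c (d + 1) n + c d (n + 1) :=
    sum_antidiagonal_mul_multichoose_succ u
  have h₃ : ∀ k, c 3 (k + 1) = c 3 k + c 2 (k + 1) := hpascal 2
  have h₂ : ∀ k, c 2 (k + 1) = c 2 k + c 1 (k + 1) := hpascal 1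
  have h₁ : c 1 (n + 3) = c 1 (n + 2) + c 0 (n + 3) := hpascal 0 (n + 2)
  have h₀ : c 0 (n + 3) = c 3 (n + 2) := (sum_antidiagonal_mul_multichoose_zero u _).trans (hu' _)
  rw [hu', hu', hu', hu']
  linear_combination h₃ (n + 2) - 2 * h₃ (n + 1) + h₃ n + h₂ (n + 2) - h₂ (n + 1) + h₁ + h₀

/-- Compositions of `n` with `(k + 1).choose 2` kinds of part `k`, grouped by their number `i` of
parts: `(x / (1 - x)³)ⁱ` contributes `multichoose (3 i) (n - i)`. -/
def triangularCompositions (n : ℕ) : ℕ :=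
  ∑ p ∈ antidiagonal n, (3 * p.1).multichoose p.2

theorem triangularCompositions_zero : triangularCompositions 0 = 1 := by
  simp [triangularCompositions]

theorem triangularCompositions_succ (n : ℕ) :
    triangularCompositions (n + 1) =
      ∑ p ∈ antidiagonal n, triangularCompositions p.1 * (3).multichoose p.2 :=
  calc triangularCompositions (n + 1)
      = ∑ p ∈ antidiagonal n, (3 * p.1 + 3).multichoose p.2 := by
        simp [triangularCompositions, Finset.Nat.sum_antidiagonal_succ, mul_add_one]
    _ = ∑ p ∈ antidiagonal n, ∑ q ∈ antidiagonal p.2,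
          (3 * p.1).multichoose q.1 * (3).multichoose q.2 := by
        simp only [Nat.sum_antidiagonal_multichoose_mul]
    _ = ∑ p ∈ antidiagonal n, ∑ q ∈ antidiagonal p.1,
          (3 * q.1).multichoose q.2 * (3).multichoose p.2 :=
        (Finset.Nat.sum_antidiagonal_sum_antidiagonal_fst
          (fun i m j => (3 * i).multichoose m * (3).multichoose j) n).symm
    _ = ∑ p ∈ antidiagonal n, triangularCompositions p.1 * (3).multichoose p.2 := by
        simp only [triangularCompositions, sum_mul]

theorem triangularCompositions_eq_sum_range (n : ℕ) :
    triangularCompositions n = ∑ i ∈ range (n + 1), (n + 2 * i - 1).choose (n - i) := by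
  rw [triangularCompositions, Finset.Nat.sum_antidiagonal_eq_sum_range_succ
    (fun i m => (3 * i).multichoose m)]
  refine sum_congr rfl fun i hi => ?_
  rw [Nat.multichoose_eq, show 3 * i + (n - i) - 1 = n + 2 * i - 1 by
    have := mem_range_succ_iff.mp hi; omega]

theorem sum_Icc_choose_two_mul_eq_sum_antidiagonal {R : Type*} [CommSemiring R] (a : ℕ → R)
    (n : ℕ) :
    ∑ i ∈ Icc 1 (n + 1), ((n + 1 - i + 2).choose 2 : R) * a i =
      ∑ p ∈ antidiagonal n, a (p.1 + 1) * ((3).multichoose p.2 : R) := by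
  rw [Finset.Nat.sum_antidiagonal_eq_sum_range_succ_mk, ← Finset.Ico_add_one_right_eq_Icc,
    sum_Ico_eq_sum_range, Nat.add_sub_cancel]
  refine sum_congr rfl fun k hk => ?_
  rw [mul_comm, Nat.multichoose_eq, add_comm 1 k, show n + 1 - (k + 1) + 2 = n - k + 2 by omega,
    show 3 + (n - k) - 1 = n - k + 2 by omega, Nat.choose_symm_add]

theorem stmt_10 (a : ℕ → ℤ) (h1 : a 1 = 1)
    (hrec : ∀ n ≥ 1, a (n + 1) = ∑ i ∈ Finset.Icc 1 n, (Nat.choose (n - i + 2) 2 : ℤ) * a i) :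
    a 2 = 1 ∧ a 3 = 4 ∧ a 4 = 13 ∧
      (∀ n ≥ 3, a (n + 2) = 4 * a (n + 1) - 3 * a n + a (n - 1)) ∧
      ∀ n ≥ 1, a (n + 1) = ∑ i ∈ Finset.range (n + 1), (Nat.choose (n + 2 * i - 1) (n - i) : ℤ) := by
  have hconv : ∀ n, a (n + 2) = ∑ p ∈ antidiagonal n, a (p.1 + 1) * ((3).multichoose p.2 : ℤ) :=
    fun n => (hrec (n + 1) n.succ_pos).trans (sum_Icc_choose_two_mul_eq_sum_antidiagonal a n)
  have hclosed : ∀ n, a (n + 1) = triangularCompositions n := by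
    refine congrFun (eq_of_forall_succ_eq_sum_antidiagonal (u := fun n => a (n + 1))
      (fun j => ((3).multichoose j : ℤ)) (by simp [h1, triangularCompositions_zero]) hconv
      fun n => ?_)
    exact_mod_cast triangularCompositions_succ n
  have hsum : ∀ n, a (n + 1) = ∑ i ∈ range (n + 1), ((n + 2 * i - 1).choose (n - i) : ℤ) := by
    intro n
    rw [hclosed, triangularCompositions_eq_sum_range, Nat.cast_sum]
  refine ⟨(hsum 1).trans (by decide), (hsum 2).trans (by decide), (hsum 3).trans (by decide),
    fun n hn => ?_, fun n _ => hsum n⟩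
  obtain ⟨m, rfl⟩ : ∃ m, n = m + 3 := ⟨n - 3, by omega⟩
  exact four_term_recurrence_of_succ_eq_sum_antidiagonal (fun n => a (n + 1)) hconv m
end

section
/- Let k, p, m be nonnegative integers with m ≥ 1, set b_i = k + p m^{i-1}, and define a_1 = 1, a_{n+1} = Σ_{i=1}^{n} b_{n+1-i} a_i. Then a_2 = k+p, a_3 = k + pm + (k+p)^2, and for all n ≥ 2, a_{n+2} = (k+m+p+1) a_{n+1} - (km+m+p) a_n. -/
/-! The weights `b_{j+1} = k + p m^j` satisfy the affine recursion
`b_{j+2} = m b_{j+1} + k (1 - m)`. Shifting the convolution `a_{n+1} = ∑ b_{n+1-i} a_i` by one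
index and using this recursion gives `a_{n+2} = (b_1 + m) a_{n+1} + k (1 - m) ∑_{i ≤ n} a_i`;
subtracting the same identity at `n - 1` eliminates the partial sum and leaves a three-term
recurrence. -/

section AffineWeights

variable {w a : ℕ → ℤ} {r s : ℤ}

theorem sum_Icc_mul_of_affine (hw : ∀ j, w (j + 1) = r * w j + s) (n : ℕ) :
    ∑ i ∈ Finset.Icc 1 n, w (n + 1 - i) * a i
      = r * ∑ i ∈ Finset.Icc 1 n, w (n - i) * a i + s * ∑ i ∈ Finset.Icc 1 n, a i := by
  rw [Finset.mul_sum, Finset.mul_sum, ← Finset.sum_add_distrib]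
  refine Finset.sum_congr rfl fun i hi => ?_
  rw [show n + 1 - i = n - i + 1 by grind, hw]
  ring

variable (hw : ∀ j, w (j + 1) = r * w j + s)
  (hrec : ∀ n ≥ 1, a (n + 1) = ∑ i ∈ Finset.Icc 1 n, w (n - i) * a i)
include hw hrec

theorem convolution_succ_eq {n : ℕ} (hn : 1 ≤ n) :
    a (n + 2) = (w 0 + r) * a (n + 1) + s * ∑ i ∈ Finset.Icc 1 n, a i := by
  rw [hrec (n + 1) (by omega), Finset.sum_Icc_succ_top (by omega), Nat.sub_self,
    sum_Icc_mul_of_affine hw, ← hrec n hn]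
  ring

theorem convolution_three_term {n : ℕ} (hn : 2 ≤ n) :
    a (n + 2) = (w 0 + r + 1) * a (n + 1) - (w 0 + r - s) * a n := by
  obtain ⟨j, rfl⟩ : ∃ j, n = j + 1 := ⟨n - 1, by omega⟩
  have hsucc := convolution_succ_eq hw hrec (n := j + 1) (by omega)
  have hprev := convolution_succ_eq hw hrec (n := j) (by omega)
  rw [Finset.sum_Icc_succ_top (by omega)] at hsucc
  linear_combination hsucc - hprev

end AffineWeights

theorem stmt_11_general (k p m : ℕ) (a : ℕ → ℤ) (h1 : a 1 = 1)
    (hrec : ∀ n ≥ 1, a (n + 1) = ∑ i ∈ Finset.Icc 1 n, ((k + p * m ^ (n - i) : ℕ) : ℤ) * a i) :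
    a 2 = k + p ∧ a 3 = (k : ℤ) + p * m + ((k : ℤ) + p) ^ 2 ∧
      ∀ n ≥ 2, a (n + 2) = ((k : ℤ) + m + p + 1) * a (n + 1) - ((k : ℤ) * m + m + p) * a n := by
  have hw : ∀ j, ((k + p * m ^ (j + 1) : ℕ) : ℤ) = m * ((k + p * m ^ j : ℕ) : ℤ) + (k - k * m) := by
    intro j
    push_cast
    ring
  have ha2 : a 2 = k + p := by
    rw [hrec 1 le_rfl, Finset.Icc_self, Finset.sum_singleton, h1]
    push_cast
    ring
  refine ⟨ha2, ?_, fun n hn => ?_⟩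
  · rw [hrec 2 (by norm_num), Finset.sum_Icc_succ_top (by norm_num), Finset.Icc_self,
      Finset.sum_singleton, h1, ha2]
    push_cast
    ring
  · rw [convolution_three_term (w := fun j => ((k + p * m ^ j : ℕ) : ℤ)) hw hrec hn]
    push_cast
    ring

theorem stmt_11 (k p m : ℕ) (hm : m ≥ 1) (a : ℕ → ℤ) (h1 : a 1 = 1)
    (hrec : ∀ n ≥ 1, a (n + 1) = ∑ i ∈ Finset.Icc 1 n, ((k + p * m ^ (n - i) : ℕ) : ℤ) * a i) :
    a 2 = k + p ∧ a 3 = (k : ℤ) + p * m + ((k : ℤ) + p) ^ 2 ∧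
      ∀ n ≥ 2, a (n + 2) = ((k : ℤ) + m + p + 1) * a (n + 1) - ((k : ℤ) * m + m + p) * a n :=
  stmt_11_general k p m a h1 hrec
end

section
/- Define a_1 = 1, a_{n+1} = Σ_{i=1}^{n} (2^{n-i} - 1) a_i. Then a_{n+1} = F_{2n-2} for all n ≥ 1, where F denotes the Fibonacci numbers with F_0 = 0. -/
/-!
Write `S n = a 1 + ⋯ + a n` and `W n = ∑ i ≤ n, (2 ^ (n - i) - 1) * a i`. Since
`2 ^ (m + 1) - 1 = 2 * (2 ^ m - 1) + 1`, the weighted sums satisfy `W (n + 1) = 2 * W n + S n`.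
As `a (n + 1) = W n`, this gives `a (n + 2) = a (n + 1) + S (n + 1)`, and together with
`S (n + 2) = S (n + 1) + a (n + 2)` the pair `(a (k + 2), S (k + 2))` follows the Fibonacci
numbers `(F (2k), F (2k + 1))`.
-/

open Finset

lemma two_pow_succ_sub_one (m : ℕ) : 2 ^ (m + 1) - 1 = 2 * (2 ^ m - 1) + 1 := by
  have : 1 ≤ 2 ^ m := Nat.one_le_two_pow
  rw [pow_succ]
  omega

lemma sum_Icc_two_pow_sub_one_mul_succ (a : ℕ → ℕ) (n : ℕ) :
    ∑ i ∈ Icc 1 (n + 1), (2 ^ (n + 1 - i) - 1) * a i =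
      2 * ∑ i ∈ Icc 1 n, (2 ^ (n - i) - 1) * a i + ∑ i ∈ Icc 1 n, a i := by
  have hterm : ∀ i ∈ Icc 1 n,
      (2 ^ (n + 1 - i) - 1) * a i = 2 * ((2 ^ (n - i) - 1) * a i) + a i := by
    intro i hi
    rw [Nat.sub_add_comm (mem_Icc.1 hi).2, two_pow_succ_sub_one]
    ring
  rw [sum_Icc_succ_top (by omega), Nat.sub_self, pow_zero, Nat.sub_self, zero_mul, add_zero,
    sum_congr rfl hterm, sum_add_distrib, mul_sum]

lemma succ_succ_eq_add_sum_Icc {a : ℕ → ℕ}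
    (hrec : ∀ n ≥ 1, a (n + 1) = ∑ i ∈ Icc 1 n, (2 ^ (n - i) - 1) * a i)
    {n : ℕ} (hn : 1 ≤ n) :
    a (n + 2) = a (n + 1) + ∑ i ∈ Icc 1 (n + 1), a i := by
  rw [hrec (n + 1) (by omega), sum_Icc_two_pow_sub_one_mul_succ, ← hrec n hn,
    sum_Icc_succ_top (by omega)]
  ring

lemma eq_fib_and_sum_Icc_eq_fib {a : ℕ → ℕ} (h1 : a 1 = 1)
    (hrec : ∀ n ≥ 1, a (n + 1) = ∑ i ∈ Icc 1 n, (2 ^ (n - i) - 1) * a i) (k : ℕ) :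
    a (k + 2) = Nat.fib (2 * k) ∧ ∑ i ∈ Icc 1 (k + 2), a i = Nat.fib (2 * k + 1) := by
  induction k with
  | zero =>
    have ha2 : a 2 = 0 := by simpa using hrec 1 le_rfl
    refine ⟨ha2, ?_⟩
    rw [sum_Icc_succ_top (by omega), Icc_self, sum_singleton, h1, ha2]
    rfl
  | succ k ih =>
    obtain ⟨ha, hS⟩ := ih
    have ha' : a (k + 3) = Nat.fib (2 * (k + 1)) := by
      rw [succ_succ_eq_add_sum_Icc hrec (by omega : 1 ≤ k + 1), ha, hS, mul_add, mul_one,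
        Nat.fib_add_two]
    refine ⟨ha', ?_⟩
    rw [sum_Icc_succ_top (by omega), hS, ha', mul_add, mul_one, Nat.fib_add_two (n := 2 * k + 1)]

theorem stmt_13 (a : ℕ → ℕ) (h1 : a 1 = 1)
    (hrec : ∀ n ≥ 1, a (n + 1) = ∑ i ∈ Finset.Icc 1 n, (2 ^ (n - i) - 1) * a i) :
    ∀ n ≥ 1, a (n + 1) = Nat.fib (2 * n - 2) := by
  rintro (_ | k) hk
  · omega
  · simpa [Nat.mul_succ] using (eq_fib_and_sum_Icc_eq_fib h1 hrec k).1
end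

section
/- Define a_1 = 1, a_{n+1} = Σ_{i=1}^{n} ⌊(n+1-i)/2⌋ a_i. Then a_2 = 0, a_3 = a_4 = 1, and for all n ≥ 3, a_{n+3} = a_{n+2} + 2 a_{n+1} - a_n. -/
/-!
Since `⌊(m + 2) / 2⌋ = ⌊m / 2⌋ + 1`, the recurrence gives
`a (n + 3) - a (n + 1) = a 1 + ⋯ + a (n + 1)`; differencing this once more yields the
linear recurrence.
-/

open Finset

theorem sum_Icc_div_two_mul_add_two {R : Type*} [CommRing R] (f : ℕ → R) (n : ℕ) :
    ∑ i ∈ Icc 1 (n + 2), (((n + 3 - i) / 2 : ℕ) : R) * f i =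
      ∑ i ∈ Icc 1 n, (((n + 1 - i) / 2 : ℕ) : R) * f i + ∑ i ∈ Icc 1 (n + 1), f i := by
  have hweight : ∀ i ∈ Icc 1 (n + 1),
      (((n + 3 - i) / 2 : ℕ) : R) * f i = (((n + 1 - i) / 2 : ℕ) : R) * f i + f i := by
    intro i hi
    rw [mem_Icc] at hi
    rw [show (n + 3 - i) / 2 = (n + 1 - i) / 2 + 1 by omega]
    push_cast
    ring
  rw [sum_Icc_succ_top (by omega : 1 ≤ n + 2), sum_congr rfl hweight, sum_add_distrib,
    sum_Icc_succ_top (by omega : 1 ≤ n + 1)]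
  simp

theorem stmt_14 (a : ℕ → ℤ) (h1 : a 1 = 1)
    (hrec : ∀ n ≥ 1, a (n + 1) = ∑ i ∈ Finset.Icc 1 n, (((n + 1 - i) / 2 : ℕ) : ℤ) * a i) :
    a 2 = 0 ∧ a 3 = 1 ∧ a 4 = 1 ∧
      ∀ n ≥ 3, a (n + 3) = a (n + 2) + 2 * a (n + 1) - a n := by
  have h2 : a 2 = 0 := by simpa using hrec 1 le_rfl
  have h3 : a 3 = 1 := by
    rw [hrec 2 (by norm_num), sum_Icc_div_two_mul_add_two a 0]
    simp [h1]
  have hdiff : ∀ n ≥ 1, a (n + 3) = a (n + 1) + ∑ i ∈ Icc 1 (n + 1), a i := by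
    intro n hn
    rw [hrec (n + 2) (by omega), sum_Icc_div_two_mul_add_two, hrec n hn]
  refine ⟨h2, h3, ?_, fun n hn => ?_⟩
  · rw [hdiff 1 le_rfl, sum_Icc_succ_top (by norm_num), Icc_self, sum_singleton, h1, h2]
    norm_num
  · obtain ⟨m, rfl⟩ : ∃ m, n = m + 1 := ⟨n - 1, by omega⟩
    have hnext := hdiff (m + 1) (by omega)
    have hprev := hdiff m (by omega)
    have hsum := sum_Icc_succ_top (by omega : 1 ≤ m + 2) a
    linear_combination hnext - hprev + hsum
end

section
/- Define a_1 = 1, a_{n+1} = Σ_{i=1}^{n} ⌈(n+1-i)/2⌉ a_i. Then a_2 = 1, a_3 = 2, a_4 = 5, and for all n ≥ 3, a_{n+3} = 2 a_{n+2} + a_{n+1} - a_n. -/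
/-!
Raising the index by two raises every coefficient `⌊(n + 2 - i) / 2⌋` by one and adds two
terms with coefficient zero, so `a (n + 3) = a (n + 1) + ∑_{i ≤ n + 2} a i`. Subtracting this
identity from its shift by one leaves `a (n + 3) - a (n + 2) = a (n + 2) + a (n + 1) - a n`.
-/

open Finset

section CompositionRecurrence

variable {R : Type*} [CommRing R] {a : ℕ → R}

lemma sum_Icc_add_two_half_mul (n : ℕ) :
    ∑ i ∈ Icc 1 (n + 2), (((n + 2 - i) / 2 : ℕ) : R) * a i =
      ∑ i ∈ Icc 1 n, (((n + 2 - i) / 2 : ℕ) : R) * a i := by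
  rw [sum_Icc_succ_top (by omega), sum_Icc_succ_top (by omega)]
  simp

lemma add_three_eq_add_one_add_sum
    (hrec : ∀ n ≥ 1, a (n + 1) = ∑ i ∈ Icc 1 n, (((n + 2 - i) / 2 : ℕ) : R) * a i)
    {n : ℕ} (hn : 1 ≤ n) :
    a (n + 3) = a (n + 1) + ∑ i ∈ Icc 1 (n + 2), a i := by
  have hcoeff : ∀ i ∈ Icc 1 (n + 2), (((n + 2 + 2 - i) / 2 : ℕ) : R) * a i =
      (((n + 2 - i) / 2 : ℕ) : R) * a i + a i := by
    intro i hi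
    rw [mem_Icc] at hi
    rw [show (n + 2 + 2 - i) / 2 = (n + 2 - i) / 2 + 1 by omega]
    push_cast
    ring
  rw [hrec (n + 2) (by omega), sum_congr rfl hcoeff, sum_add_distrib,
    sum_Icc_add_two_half_mul, hrec n hn]

lemma add_three_eq_two_mul_add_two_add_add_one_sub
    (hrec : ∀ n ≥ 1, a (n + 1) = ∑ i ∈ Icc 1 n, (((n + 2 - i) / 2 : ℕ) : R) * a i)
    {n : ℕ} (hn : 2 ≤ n) :
    a (n + 3) = 2 * a (n + 2) + a (n + 1) - a n := by
  obtain ⟨m, rfl⟩ : ∃ m, n = m + 1 := ⟨n - 1, by omega⟩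
  have hsucc := add_three_eq_add_one_add_sum hrec (n := m + 1) (by omega)
  have hprev := add_three_eq_add_one_add_sum hrec (n := m) (by omega)
  rw [sum_Icc_succ_top (by omega)] at hsucc
  simp only [add_assoc, Nat.reduceAdd] at hsucc ⊢
  linear_combination hsucc - hprev

end CompositionRecurrence

theorem stmt_15 (a : ℕ → ℤ) (h1 : a 1 = 1)
    (hrec : ∀ n ≥ 1, a (n + 1) = ∑ i ∈ Finset.Icc 1 n, (((n + 2 - i) / 2 : ℕ) : ℤ) * a i) :
    a 2 = 1 ∧ a 3 = 2 ∧ a 4 = 5 ∧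
      ∀ n ≥ 3, a (n + 3) = 2 * a (n + 2) + a (n + 1) - a n := by
  have h2 : a 2 = 1 := by simpa [h1] using hrec 1 le_rfl
  have h3 : a 3 = 2 := by
    rw [hrec 2 (by norm_num), sum_Icc_succ_top (by norm_num)]
    norm_num [h1, h2]
  have h4 : a 4 = 5 := by
    rw [add_three_eq_add_one_add_sum hrec le_rfl, sum_Icc_succ_top (by norm_num),
      sum_Icc_succ_top (by norm_num)]
    norm_num [h1, h2, h3]
  exact ⟨h2, h3, h4, fun n hn => add_three_eq_two_mul_add_two_add_add_one_sub hrec (by omega)⟩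
end

section
/- Let p, q be nonnegative integers, set b_1 = p and b_i = q for i ≥ 2, and define a_1 = 1, a_{n+1} = Σ_{i=1}^{n} b_{n+1-i} a_i. Then a_2 = p, a_3 = p^2 + q, and for all n ≥ 2, a_{n+2} = (1+p) a_{n+1} + (q-p) a_n. -/
/-! Since `b i = q` for `i ≥ 2`, the recurrence reads `a (n+2) = p a (n+1) + q (a 1 + ⋯ + a n)`;
subtracting two consecutive instances eliminates the partial sum and leaves a three-term recurrence. -/

open Finset

section ConvolutionRecurrence

variable {R : Type*} [CommRing R] {p q : R} {b a : ℕ → R}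

theorem eq_mul_add_mul_sum_of_convolution (hb1 : b 1 = p) (hb : ∀ i ≥ 2, b i = q)
    (hrec : ∀ n ≥ 1, a (n + 1) = ∑ i ∈ Icc 1 n, b (n + 1 - i) * a i) (n : ℕ) :
    a (n + 2) = p * a (n + 1) + q * ∑ i ∈ Icc 1 n, a i := by
  have hconst : ∀ i ∈ Icc 1 n, b (n + 2 - i) * a i = q * a i := fun i hi => by
    rw [hb _ (by simp only [mem_Icc] at hi; omega)]
  rw [hrec (n + 1) (by omega), sum_Icc_succ_top (by omega), sum_congr rfl hconst, ← mul_sum,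
    Nat.add_sub_cancel_left, hb1, add_comm]

theorem three_term_of_convolution (hb1 : b 1 = p) (hb : ∀ i ≥ 2, b i = q)
    (hrec : ∀ n ≥ 1, a (n + 1) = ∑ i ∈ Icc 1 n, b (n + 1 - i) * a i) (n : ℕ) :
    a (n + 3) = (1 + p) * a (n + 2) + (q - p) * a (n + 1) := by
  have hn := eq_mul_add_mul_sum_of_convolution hb1 hb hrec n
  have hn1 := eq_mul_add_mul_sum_of_convolution hb1 hb hrec (n + 1)
  rw [sum_Icc_succ_top (by omega)] at hn1
  linear_combination hn1 - hn

end ConvolutionRecurrence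

theorem stmt_16 (p q : ℕ) (b : ℕ → ℕ) (hb1 : b 1 = p) (hb : ∀ i ≥ 2, b i = q)
    (a : ℕ → ℤ) (h1 : a 1 = 1)
    (hrec : ∀ n ≥ 1, a (n + 1) = ∑ i ∈ Finset.Icc 1 n, (b (n + 1 - i) : ℤ) * a i) :
    a 2 = p ∧ a 3 = (p : ℤ) ^ 2 + q ∧
      ∀ n ≥ 2, a (n + 2) = (1 + (p : ℤ)) * a (n + 1) + ((q : ℤ) - p) * a n := by
  have hb1' : ((b 1 : ℕ) : ℤ) = p := by rw [hb1]
  have hb' : ∀ i ≥ 2, ((b i : ℕ) : ℤ) = q := fun i hi => by rw [hb i hi]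
  have ha2 := eq_mul_add_mul_sum_of_convolution hb1' hb' hrec 0
  have ha3 := eq_mul_add_mul_sum_of_convolution hb1' hb' hrec 1
  simp only [zero_add, Icc_self, sum_singleton, Icc_eq_empty_of_lt zero_lt_one, sum_empty,
    mul_zero, add_zero, h1, mul_one] at ha2 ha3
  refine ⟨ha2, by rw [ha3, ha2, sq], fun n hn => ?_⟩
  obtain ⟨m, rfl⟩ := Nat.exists_eq_add_of_le' hn
  exact three_term_of_convolution hb1' hb' hrec (m + 1)
end

section
/- Let p, q be nonnegative integers and set b_i = p for odd i, b_i = q for even i; define a_1 = 1, a_{n+1} = Σ_{i=1}^{n} b_{n+1-i} a_i. Then a_2 = p, a_3 = p^2 + q, and for all n ≥ 2, a_{n+2} = p a_{n+1} + (1+q) a_n. In particular, for p = 1, q = 0, a_{n+1} = F_n (the number of compositions of n into odd parts is F_n). -/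
/-! When the weights `b` are `2`-periodic, the convolution sums for `a (n + 3)` and `a (n + 1)`
differ only in their two top terms, so `a (n + 3) = b 1 * a (n + 2) + b 2 * a (n + 1) + a (n + 1)`.
For `p = 1`, `q = 0` this is the Fibonacci recurrence, with the Fibonacci initial values. -/

open Finset

section ConvolutionRecurrence

variable {R : Type*} [CommRing R] {a b : ℕ → R}

theorem convolution_two
    (hrec : ∀ n ≥ 1, a (n + 1) = ∑ i ∈ Icc 1 n, b (n + 1 - i) * a i) :
    a 2 = b 1 * a 1 := by
  simpa using hrec 1 le_rfl

theorem convolution_three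
    (hrec : ∀ n ≥ 1, a (n + 1) = ∑ i ∈ Icc 1 n, b (n + 1 - i) * a i) :
    a 3 = b 2 * a 1 + b 1 * a 2 := by
  simpa [sum_Icc_succ_top] using hrec 2 (by norm_num)

theorem linear_recurrence_of_convolution_of_periodic (hb : Function.Periodic b 2)
    (hrec : ∀ n ≥ 1, a (n + 1) = ∑ i ∈ Icc 1 n, b (n + 1 - i) * a i)
    (n : ℕ) (hn : 1 ≤ n) :
    a (n + 3) = b 1 * a (n + 2) + (1 + b 2) * a (n + 1) := by
  have hlow : ∑ i ∈ Icc 1 n, b (n + 3 - i) * a i = a (n + 1) := by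
    rw [hrec n hn]
    refine sum_congr rfl fun i hi => ?_
    rw [show n + 3 - i = n + 1 - i + 2 by grind, hb]
  have htop := hrec (n + 2) (by omega)
  rw [sum_Icc_succ_top (by omega), sum_Icc_succ_top (by omega), hlow,
    show n + 2 + 1 - (n + 1) = 2 by omega, show n + 2 + 1 - (n + 2) = 1 by omega] at htop
  rw [htop]
  ring

end ConvolutionRecurrence

theorem eq_fib_of_fib_recurrence {u : ℕ → ℤ} (h1 : u 1 = 1) (h2 : u 2 = 1)
    (hrec : ∀ n ≥ 1, u (n + 2) = u (n + 1) + u n) (n : ℕ) (hn : 1 ≤ n) :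
    u n = Nat.fib n := by
  suffices u n = Nat.fib n ∧ u (n + 1) = Nat.fib (n + 1) from this.1
  induction n, hn using Nat.le_induction with
  | base => simp [h1, h2]
  | succ n hn ih =>
    refine ⟨ih.2, ?_⟩
    rw [hrec n hn, ih.1, ih.2, Nat.fib_add_two]
    push_cast
    ring

theorem stmt_18 (p q : ℕ) (b : ℕ → ℕ)
    (hbodd : ∀ i, Odd i → b i = p) (hbeven : ∀ i, Even i → b i = q)
    (a : ℕ → ℤ) (h1 : a 1 = 1)
    (hrec : ∀ n ≥ 1, a (n + 1) = ∑ i ∈ Finset.Icc 1 n, (b (n + 1 - i) : ℤ) * a i) :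
    a 2 = p ∧ a 3 = (p : ℤ) ^ 2 + q ∧
      (∀ n ≥ 2, a (n + 2) = (p : ℤ) * a (n + 1) + (1 + (q : ℤ)) * a n) ∧
      (p = 1 → q = 0 → ∀ n ≥ 1, a (n + 1) = Nat.fib n) := by
  have hb1 : b 1 = p := hbodd 1 odd_one
  have hb2 : b 2 = q := hbeven 2 even_two
  have hperiodic : Function.Periodic b 2 := fun k => by
    rcases Nat.even_or_odd k with hk | hk
    · rw [hbeven k hk, hbeven (k + 2) (hk.add even_two)]
    · rw [hbodd k hk, hbodd (k + 2) (hk.add_even even_two)]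
  have ha2 : a 2 = p := by rw [convolution_two (b := fun k => (b k : ℤ)) hrec, h1, hb1, mul_one]
  have ha3 : a 3 = (p : ℤ) ^ 2 + q := by
    rw [convolution_three (b := fun k => (b k : ℤ)) hrec, ha2, h1, hb1, hb2]
    ring
  have hlin : ∀ n ≥ 2, a (n + 2) = (p : ℤ) * a (n + 1) + (1 + (q : ℤ)) * a n := by
    intro n hn
    obtain ⟨m, rfl⟩ : ∃ m, n = m + 1 := ⟨n - 1, by omega⟩
    simpa [hb1, hb2] using linear_recurrence_of_convolution_of_periodic
      (b := fun k => (b k : ℤ)) (hperiodic.comp _) hrec m (by omega)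
  refine ⟨ha2, ha3, hlin, fun hp hq => ?_⟩
  subst hp hq
  refine eq_fib_of_fib_recurrence (u := fun n => a (n + 1)) (by simpa using ha2)
    (by simpa using ha3) (fun n hn => ?_)
  simpa using hlin (n + 1) (by omega)
end
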